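/- arXiv:2604.01511 — 2 statements merged into one kernel-verified Lean document; each statement's English description precedes it below -/
import Mathlib

section
/- Let Z and X be finite-dimensional real normed vector spaces, K ⊆ Z a convex cone, m* ∈ Z*, and E, L ∈ B(Z,X) such that L(K) = X. Then the following are equivalent: (i) there exists p* ∈ X* such that p*(L(z)) − m*(z) ≤ 0 for all z ∈ K; (ii) the pair (E,L) satisfies the dissipation inequality on K with respect to m*. Moreover, if (ii) holds, then the storage function V in the dissipation inequality can be chosen to be a bounded linear functional on X. -/
/-!
With a linear storage function `p*`, the dissipation inequality is the integral along a trajectory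
of the pointwise inequality `p*(L z) ≤ m*(z)`, since `p*(E z)` is an antiderivative of `p*(L z)`.

Conversely, constant trajectories show that `m* ≥ 0` on `K ∩ ker L`. As `L(K) = X`, every `z`
lies in `K + ker L`, so the M. Riesz extension theorem extends `m*` restricted to `ker L` to a
linear functional `g ≥ 0` on `K`. Then `m* - g` vanishes on `ker L`, hence equals `p* ∘ L` for
some `p*`, and `p*(L z) = m*(z) - g(z) ≤ m*(z)` on `K`.
-/

open Filter Set

/-- A function `f : ℝ → E` is piecewise continuous on `[a, b]` if it is continuous
there except possibly at finitely many points, at each of which it possesses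
one-sided limits. -/
def PiecewiseContinuousOn {E : Type*} [NormedAddCommGroup E]
    (f : ℝ → E) (a b : ℝ) : Prop :=
  ∃ S : Finset ℝ, ContinuousOn f (Set.Icc a b \ S) ∧
    ∀ t ∈ S, (∃ l, Tendsto f (nhdsWithin t (Set.Iio t)) (nhds l)) ∧
      (∃ l, Tendsto f (nhdsWithin t (Set.Ioi t)) (nhds l))

/-- `V` is a storage function witnessing the dissipation inequality of the pair
`(E, L)` on the cone `K` with respect to the supply rate `w`: for every
`t0 ≤ t1` and every piecewise continuous `K`-valued `z` on `[t0, t1]` with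
`d/dt E(z) = L(z)` (in integral form), one has
`V(E(z(t1))) ≤ V(E(z(t0))) + ∫_{t0}^{t1} w(z(t)) dt`. -/
def DissipationIneqWith {Z X : Type*} [NormedAddCommGroup Z] [NormedSpace ℝ Z]
    [NormedAddCommGroup X] [NormedSpace ℝ X]
    (E L : Z →L[ℝ] X) (K : Set Z) (w : Z → ℝ) (V : X → ℝ) : Prop :=
  ∀ t0 t1 : ℝ, t0 ≤ t1 → ∀ z : ℝ → Z,
    (∀ t ∈ Set.Icc t0 t1, z t ∈ K) →
    PiecewiseContinuousOn z t0 t1 →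
    (∀ s ∈ Set.Icc t0 t1, ∀ t ∈ Set.Icc t0 t1, E (z t) - E (z s) = ∫ τ in s..t, L (z τ)) →
    V (E (z t1)) ≤ V (E (z t0)) + ∫ t in t0..t1, w (z t)

open MeasureTheory Topology

section PiecewiseContinuous

variable {E : Type*} [NormedAddCommGroup E] {z : ℝ → E} {a b : ℝ}

theorem IsCompact.bddAbove_image_of_isBoundedUnder {X α : Type*} [TopologicalSpace X]
    [SemilatticeSup α] [Nonempty α] {s : Set X} (hs : IsCompact s) {u : X → α}
    (hu : ∀ x ∈ s, IsBoundedUnder (· ≤ ·) (𝓝[s] x) u) : BddAbove (u '' s) :=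
  hs.induction_on (p := fun t => BddAbove (u '' t)) (by simp)
    (fun _ _ hst h => h.mono (image_mono hst))
    (fun _ _ hs ht => by rw [image_union]; exact hs.union ht)
    (fun x hx => by
      obtain ⟨t, ht, hmem⟩ := isBoundedUnder_iff_eventually_bddAbove.1 (hu x hx)
      exact ⟨t, hmem, ht⟩)

theorem ContinuousOn.piecewiseContinuousOn (h : ContinuousOn z (Icc a b)) :
    PiecewiseContinuousOn z a b :=
  ⟨∅, by simpa using h, by simp⟩

theorem PiecewiseContinuousOn.comp {F : Type*} [NormedAddCommGroup F] {g : E → F}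
    (hg : Continuous g) (h : PiecewiseContinuousOn z a b) : PiecewiseContinuousOn (g ∘ z) a b := by
  obtain ⟨S, hcont, hlim⟩ := h
  refine ⟨S, hg.comp_continuousOn hcont, fun t ht => ?_⟩
  obtain ⟨⟨l, hl⟩, ⟨r, hr⟩⟩ := hlim t ht
  exact ⟨⟨g l, (hg.tendsto l).comp hl⟩, ⟨g r, (hg.tendsto r).comp hr⟩⟩

theorem PiecewiseContinuousOn.isBoundedUnder_norm (h : PiecewiseContinuousOn z a b) {x : ℝ}
    (hx : x ∈ Icc a b) : IsBoundedUnder (· ≤ ·) (𝓝[Icc a b] x) (‖z ·‖) := by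
  obtain ⟨S, hcont, hlim⟩ := h
  by_cases hxS : x ∈ S
  · obtain ⟨⟨l, hl⟩, ⟨r, hr⟩⟩ := hlim x hxS
    have hbdd : IsBoundedUnder (· ≤ ·) (𝓝[<] x ⊔ 𝓝[>] x ⊔ pure x) (‖z ·‖) := by
      rw [IsBoundedUnder, map_sup, map_sup]
      exact isBounded_sup (isBounded_sup hl.norm.isBoundedUnder_le hr.norm.isBoundedUnder_le)
        (isBoundedUnder_of_eventually_le (a := ‖z x‖) (eventually_pure.2 le_rfl))
    rw [nhdsLT_sup_nhdsGT, nhdsNE_sup_pure] at hbdd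
    exact hbdd.mono nhdsWithin_le_nhds
  · have hSc : (S : Set ℝ)ᶜ ∈ 𝓝 x := S.finite_toSet.isClosed.isOpen_compl.mem_nhds hxS
    have hcx : ContinuousWithinAt z (Icc a b) x := by
      rw [← continuousWithinAt_inter hSc, ← sdiff_eq]
      exact hcont x ⟨hx, hxS⟩
    exact hcx.norm.isBoundedUnder_le

theorem PiecewiseContinuousOn.intervalIntegrable (h : PiecewiseContinuousOn z a b)
    (hab : a ≤ b) : IntervalIntegrable z volume a b := by
  obtain ⟨M, hM⟩ := isCompact_Icc.bddAbove_image_of_isBoundedUnder fun _ hx =>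
    h.isBoundedUnder_norm hx
  obtain ⟨S, hcont, -⟩ := h
  have hmeas : AEStronglyMeasurable z (volume.restrict (Icc a b)) := by
    rw [← Measure.restrict_congr_set (sdiff_null_ae_eq_self (S.finite_toSet.measure_zero _))]
    exact hcont.aestronglyMeasurable (measurableSet_Icc.diff S.finite_toSet.measurableSet)
  rw [intervalIntegrable_iff_integrableOn_Icc_of_le hab]
  exact .of_bound measure_Icc_lt_top hmeas M
    ((ae_restrict_iff' measurableSet_Icc).2 (ae_of_all _ fun t ht => hM ⟨t, ht, rfl⟩))

end PiecewiseContinuous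

theorem Convex.add_mem_of_smul_mem {𝕜 M : Type*} [Field 𝕜] [LinearOrder 𝕜] [IsStrictOrderedRing 𝕜]
    [AddCommGroup M] [Module 𝕜 M] {K : Set M} (hconv : Convex 𝕜 K)
    (hcone : ∀ z ∈ K, ∀ α : 𝕜, 0 ≤ α → α • z ∈ K) {x y : M} (hx : x ∈ K) (hy : y ∈ K) :
    x + y ∈ K := by
  have hmid : (2⁻¹ : 𝕜) • x + (2⁻¹ : 𝕜) • y ∈ K :=
    hconv hx hy (by positivity) (by positivity) (by norm_num)
  simpa [smul_add, smul_smul] using hcone _ hmid 2 zero_le_two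

theorem PointedCone.exists_dual_comp_le {Z X : Type*} [AddCommGroup Z] [Module ℝ Z]
    [AddCommGroup X] [Module ℝ X] (C : PointedCone ℝ Z) (L : Z →ₗ[ℝ] X)
    (hLC : ∀ x, ∃ z ∈ C, L z = x) (m : Module.Dual ℝ Z) (hm : ∀ z ∈ C, L z = 0 → 0 ≤ m z) :
    ∃ p : Module.Dual ℝ X, ∀ z ∈ C, p (L z) ≤ m z := by
  obtain ⟨g, hgm, hgC⟩ := riesz_extension C ⟨LinearMap.ker L, m.comp (LinearMap.ker L).subtype⟩
    (fun x hx => hm x hx x.2)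
    (fun y => by
      obtain ⟨z, hzC, hzy⟩ := hLC (L y)
      exact ⟨⟨z - y, by simp [hzy]⟩, by simpa using hzC⟩)
  have hker : m - g ∈ (LinearMap.ker L).dualAnnihilator := by
    rw [Submodule.mem_dualAnnihilator]
    intro x hx
    simpa [sub_eq_zero] using (hgm ⟨x, hx⟩).symm
  rw [← LinearMap.range_dualMap_eq_dualAnnihilator_ker] at hker
  obtain ⟨p, hp⟩ := hker
  refine ⟨p, fun z hz => ?_⟩
  have hpz : p (L z) = m z - g z := by rw [← LinearMap.dualMap_apply, hp]; rfl
  linarith [hgC z hz]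

section Dissipation

variable {Z X : Type*} [NormedAddCommGroup Z] [NormedSpace ℝ Z]
  [NormedAddCommGroup X] [NormedSpace ℝ X] {E L : Z →L[ℝ] X} {K : Set Z}

theorem dissipationIneqWith_of_comp_le [CompleteSpace X] {m : Z →L[ℝ] ℝ} {p : X →L[ℝ] ℝ}
    (hp : ∀ z ∈ K, p (L z) ≤ m z) : DissipationIneqWith E L K (fun z => m z) (fun x => p x) := by
  intro t0 t1 ht z hzK hz hEL
  have hLz : IntervalIntegrable (fun t => L (z t)) volume t0 t1 :=
    (hz.comp L.continuous).intervalIntegrable ht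
  have hincrement : p (E (z t1)) - p (E (z t0)) = ∫ t in t0..t1, p (L (z t)) := by
    rw [← map_sub, hEL t0 ⟨le_rfl, ht⟩ t1 ⟨ht, le_rfl⟩, p.intervalIntegral_comp_comm hLz]
  have hsupply : ∫ t in t0..t1, p (L (z t)) ≤ ∫ t in t0..t1, m (z t) :=
    intervalIntegral.integral_mono_on ht ((hz.comp (p.comp L).continuous).intervalIntegrable ht)
      ((hz.comp m.continuous).intervalIntegrable ht) fun t ht => hp _ (hzK t ht)
  linarith

theorem DissipationIneqWith.nonneg_of_map_eq_zero {w : Z → ℝ} {V : X → ℝ}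
    (h : DissipationIneqWith E L K w V) {z : Z} (hz : z ∈ K) (hLz : L z = 0) : 0 ≤ w z := by
  simpa using h 0 1 zero_le_one (fun _ => z) (fun _ _ => hz)
    continuousOn_const.piecewiseContinuousOn (fun _ _ _ _ => by simp [hLz])

theorem DissipationIneqWith.exists_comp_le [FiniteDimensional ℝ X]
    (hKcone : ∀ z ∈ K, ∀ α : ℝ, 0 ≤ α → α • z ∈ K) (hKconv : Convex ℝ K) (hLK : L '' K = univ)
    {m : Z →L[ℝ] ℝ} {V : X → ℝ} (h : DissipationIneqWith E L K (fun z => m z) V) :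
    ∃ p : X →L[ℝ] ℝ, ∀ z ∈ K, p (L z) ≤ m z := by
  have hLK' (x : X) : ∃ z ∈ K, L z = x := eq_univ_iff_forall.1 hLK x
  obtain ⟨z₀, hz₀, -⟩ := hLK' 0
  let C : PointedCone ℝ Z := .ofConeComb K ⟨z₀, hz₀⟩ fun x hx y hy a ha b hb =>
    hKconv.add_mem_of_smul_mem hKcone (hKcone x hx a ha) (hKcone y hy b hb)
  obtain ⟨p, hp⟩ := C.exists_dual_comp_le L hLK' m fun z hz hLz =>
    h.nonneg_of_map_eq_zero hz (by exact hLz)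
  exact ⟨LinearMap.toContinuousLinearMap p, hp⟩

end Dissipation

theorem exists_functional_conic_ineq_iff_dissipation_general
    {Z X : Type*} [NormedAddCommGroup Z] [NormedSpace ℝ Z]
    [NormedAddCommGroup X] [NormedSpace ℝ X] [FiniteDimensional ℝ X]
    (K : Set Z) (hKcone : ∀ z ∈ K, ∀ α : ℝ, 0 ≤ α → α • z ∈ K) (hKconv : Convex ℝ K)
    (mstar : Z →L[ℝ] ℝ) (E L : Z →L[ℝ] X) (hLK : L '' K = Set.univ) :
    ((∃ pstar : X →L[ℝ] ℝ, ∀ z ∈ K, pstar (L z) - mstar z ≤ 0) ↔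
      (∃ V : X → ℝ, Continuous V ∧ V 0 = 0 ∧
        DissipationIneqWith E L K (fun z => mstar z) V)) ∧
    ((∃ V : X → ℝ, Continuous V ∧ V 0 = 0 ∧
        DissipationIneqWith E L K (fun z => mstar z) V) →
      ∃ q : X →L[ℝ] ℝ, DissipationIneqWith E L K (fun z => mstar z) (fun x => q x)) := by
  refine ⟨⟨fun ⟨p, hp⟩ => ⟨fun x => p x, p.continuous, map_zero p,
      dissipationIneqWith_of_comp_le fun z hz => sub_nonpos.1 (hp z hz)⟩,
    fun ⟨V, _, _, hV⟩ => ?_⟩, fun ⟨V, _, _, hV⟩ => ?_⟩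
  · obtain ⟨p, hp⟩ := hV.exists_comp_le hKcone hKconv hLK
    exact ⟨p, fun z hz => sub_nonpos.2 (hp z hz)⟩
  · obtain ⟨p, hp⟩ := hV.exists_comp_le hKcone hKconv hLK
    exact ⟨p, dissipationIneqWith_of_comp_le hp⟩

/-- Corollary: dissipation inequality. The conic inequality is
solvable iff `(E, L)` satisfies the dissipation inequality on `K` w.r.t. `m*`
(i.e. some continuous storage `V` with `V 0 = 0` exists); moreover in that case
the storage function can be chosen to be a bounded linear functional on `X`. -/
theorem exists_functional_conic_ineq_iff_dissipation
    {Z X : Type*} [NormedAddCommGroup Z] [NormedSpace ℝ Z] [FiniteDimensional ℝ Z]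
    [NormedAddCommGroup X] [NormedSpace ℝ X] [FiniteDimensional ℝ X]
    (K : Set Z) (hKcone : ∀ z ∈ K, ∀ α : ℝ, 0 ≤ α → α • z ∈ K) (hKconv : Convex ℝ K)
    (mstar : Z →L[ℝ] ℝ) (E L : Z →L[ℝ] X) (hLK : L '' K = Set.univ) :
    ((∃ pstar : X →L[ℝ] ℝ, ∀ z ∈ K, pstar (L z) - mstar z ≤ 0) ↔
      (∃ V : X → ℝ, Continuous V ∧ V 0 = 0 ∧
        DissipationIneqWith E L K (fun z => mstar z) V)) ∧
    ((∃ V : X → ℝ, Continuous V ∧ V 0 = 0 ∧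
        DissipationIneqWith E L K (fun z => mstar z) V) →
      ∃ q : X →L[ℝ] ℝ, DissipationIneqWith E L K (fun z => mstar z) (fun x => q x)) :=
  exists_functional_conic_ineq_iff_dissipation_general K hKcone hKconv mstar E L hLK
end

section
/- Let Z and X be finite-dimensional real normed vector spaces, K ⊆ Z a convex cone, and E, L ∈ B(Z,X) such that the pair (E,L) is controllable on K and E(K) has nonempty interior in X. Then for any m* ∈ Z*, the following are equivalent: (i) there exists p* ∈ X* such that p*(L(z)) − m*(z) ≤ 0 for all z ∈ K; (ii) for every piecewise continuous z : ℝ → K satisfying d/dt E(z) = L(z) on ℝ and ∫_{−∞}^{∞} ‖z(t)‖_Z dt < ∞, the improper integral ∫_{−∞}^{∞} m*(z(t)) dt (taken as a principal value) is ≥ 0; (iii) m*(z0) ≥ 0 for every z0 ∈ K such that L(z0) = 0. -/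
open Filter Set

/-- The pair `(E, L)` is controllable on the cone `K`: for all `x0, x1 ∈ E(K)` there
are `t1 ≥ 0` and a continuous `K`-valued `z` on `[0, t1]` with `d/dt E(z) = L(z)`
(in integral form), `E(z(0)) = x0` and `E(z(t1)) = x1`. -/
def ControllableOn {Z X : Type*} [NormedAddCommGroup Z] [NormedSpace ℝ Z]
    [NormedAddCommGroup X] [NormedSpace ℝ X]
    (E L : Z →L[ℝ] X) (K : Set Z) : Prop :=
  ∀ x0 ∈ E '' K, ∀ x1 ∈ E '' K, ∃ t1 : ℝ, 0 ≤ t1 ∧ ∃ z : ℝ → Z,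
    ContinuousOn z (Set.Icc 0 t1) ∧ (∀ t ∈ Set.Icc 0 t1, z t ∈ K) ∧
    (∀ s ∈ Set.Icc 0 t1, ∀ t ∈ Set.Icc 0 t1,
      E (z t) - E (z s) = ∫ τ in s..t, L (z τ)) ∧
    E (z 0) = x0 ∧ E (z t1) = x1

/-!
(i) ⇒ (ii): a trajectory with `∫ ‖z‖ < ∞` is integrable, so `T ↦ E z(T) - E z(-T)` is an
integrable function of `T` converging to `∫ L z`, which forces `∫ L z = 0`; integrating
`p*(L z) ≤ m*(z)` then gives `∫ m*(z) ≥ p*(∫ L z) = 0`.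

(ii) ⇒ (iii): if `z₀ ∈ K` and `L z₀ = 0`, controllability steers from rest to `E z₀` and back;
in between the trajectory may dwell at the equilibrium `z₀` for any time `τ`. The integral of
`m*` along this excursion is `A + τ m*(z₀) + B`, which stays nonnegative for all `τ ≥ 0` only if
`m*(z₀) ≥ 0`.

(iii) ⇒ (i): averaging controlled trajectories shows that `closure (L K)` contains
`E(K) - E(K)`, hence a neighbourhood of `0`. In finite dimensions a convex set and its closure have the
same interior, so the convex cone `L K` is all of `X`. The M. Riesz extension theorem, applied to
the cone `{(L z, r) | z ∈ K, m*(z) ≤ r}` in `X × ℝ` and the functional `(0, r) ↦ r`, which is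
nonnegative there by (iii), yields `p*`.
-/

open MeasureTheory Topology

def IsPiecewiseContinuous {E : Type*} [TopologicalSpace E] (f : ℝ → E) : Prop :=
  (∃ S : Finset ℝ, ∀ t ∉ S, ContinuousAt f t) ∧
    ∀ t, (∃ l, Tendsto f (𝓝[<] t) (𝓝 l)) ∧ ∃ l, Tendsto f (𝓝[>] t) (𝓝 l)

section PiecewiseContinuity

variable {E F : Type*} [TopologicalSpace E] [TopologicalSpace F] {f g h : ℝ → E}

theorem Continuous.isPiecewiseContinuous (hf : Continuous f) : IsPiecewiseContinuous f :=
  ⟨⟨∅, fun _ _ => hf.continuousAt⟩, fun t =>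
    ⟨⟨f t, hf.continuousAt.mono_left nhdsWithin_le_nhds⟩,
      ⟨f t, hf.continuousAt.mono_left nhdsWithin_le_nhds⟩⟩⟩

theorem IsPiecewiseContinuous.comp {φ : E → F} (hφ : Continuous φ)
    (hf : IsPiecewiseContinuous f) : IsPiecewiseContinuous (φ ∘ f) := by
  obtain ⟨⟨S, hS⟩, hlim⟩ := hf
  refine ⟨⟨S, fun t ht => hφ.continuousAt.comp (hS t ht)⟩, fun t => ?_⟩
  obtain ⟨⟨l, hl⟩, ⟨r, hr⟩⟩ := hlim t
  exact ⟨⟨φ l, (hφ.tendsto l).comp hl⟩, ⟨φ r, (hφ.tendsto r).comp hr⟩⟩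

theorem IsPiecewiseContinuous.piecewise_Iic (hg : IsPiecewiseContinuous g)
    (hh : IsPiecewiseContinuous h) (p : ℝ) : IsPiecewiseContinuous ((Iic p).piecewise g h) := by
  obtain ⟨⟨Sg, hSg⟩, hg⟩ := hg
  obtain ⟨⟨Sh, hSh⟩, hh⟩ := hh
  have eq_g : ∀ {t : ℝ}, t < p → (Iic p).piecewise g h =ᶠ[𝓝 t] g := fun ht =>
    (piecewise_eqOn (Iic p) g h).eventuallyEq_of_mem (Iic_mem_nhds ht)
  have eq_h : ∀ {t : ℝ}, p < t → (Iic p).piecewise g h =ᶠ[𝓝 t] h := fun ht =>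
    (piecewise_eqOn_compl (Iic p) g h).eventuallyEq_of_mem (by simpa using Ioi_mem_nhds ht)
  refine ⟨⟨insert p (Sg ∪ Sh), fun t ht => ?_⟩, fun t => ⟨?_, ?_⟩⟩
  · simp only [Finset.mem_insert, Finset.mem_union, not_or] at ht
    rcases Ne.lt_or_gt ht.1 with htp | hpt
    · exact (hSg t ht.2.1).congr (eq_g htp).symm
    · exact (hSh t ht.2.2).congr (eq_h hpt).symm
  · rcases le_or_gt t p with htp | hpt
    · obtain ⟨l, hl⟩ := (hg t).1
      exact ⟨l, hl.congr' ((piecewise_eqOn (Iic p) g h).mono fun x (hx : x < t) =>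
        hx.le.trans htp).eventuallyEq_nhdsWithin.symm⟩
    · obtain ⟨l, hl⟩ := (hh t).1
      exact ⟨l, hl.congr' ((eq_h hpt).filter_mono nhdsWithin_le_nhds).symm⟩
  · rcases lt_or_ge t p with htp | hpt
    · obtain ⟨l, hl⟩ := (hg t).2
      exact ⟨l, hl.congr' ((eq_g htp).filter_mono nhdsWithin_le_nhds).symm⟩
    · obtain ⟨l, hl⟩ := (hh t).2
      exact ⟨l, hl.congr' ((piecewise_eqOn_compl (Iic p) g h).mono fun x (hx : t < x) =>
        notMem_Iic.2 (hpt.trans_lt hx)).eventuallyEq_nhdsWithin.symm⟩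

end PiecewiseContinuity

theorem IsCompact.exists_bound_of_forall_eventually_norm_le {X E : Type*} [TopologicalSpace X]
    [Norm E] {f : X → E} {s T : Set X} (hs : IsCompact s)
    (hf : ∀ x ∈ s, ∃ C, ∀ᶠ y in 𝓝[T] x, ‖f y‖ ≤ C) : ∃ C, ∀ y ∈ s ∩ T, ‖f y‖ ≤ C := by
  refine hs.induction_on (p := fun U => ∃ C, ∀ y ∈ U ∩ T, ‖f y‖ ≤ C) ⟨0, by simp⟩
    (fun U V hUV ⟨C, hC⟩ => ⟨C, fun y hy => hC y ⟨hUV hy.1, hy.2⟩⟩)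
    (fun U V ⟨C, hC⟩ ⟨D, hD⟩ => ⟨max C D, ?_⟩) fun x hx => ?_
  · rintro y ⟨hy | hy, hyT⟩
    exacts [le_max_of_le_left (hC y ⟨hy, hyT⟩), le_max_of_le_right (hD y ⟨hy, hyT⟩)]
  · obtain ⟨C, hC⟩ := hf x hx
    exact ⟨_, mem_nhdsWithin_of_mem_nhds (eventually_nhdsWithin_iff.1 hC), C,
      fun y hy => hy.1 hy.2⟩

section Integrability

variable {E : Type*} [NormedAddCommGroup E] {f : ℝ → E}

theorem IsPiecewiseContinuous.piecewiseContinuousOn (hf : IsPiecewiseContinuous f) (a b : ℝ) :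
    PiecewiseContinuousOn f a b :=
  let ⟨⟨S, hS⟩, hlim⟩ := hf
  ⟨S, fun t ht => (hS t ht.2).continuousWithinAt, fun t _ => hlim t⟩

theorem PiecewiseContinuousOn.integrableOn_Icc {a b : ℝ} (hf : PiecewiseContinuousOn f a b) :
    IntegrableOn f (Icc a b) := by
  obtain ⟨S, hcont, hlim⟩ := hf
  have hS : (S : Set ℝ).Finite := S.finite_toSet
  have hbound : ∀ t ∈ Icc a b, ∃ C, ∀ᶠ x in 𝓝[Icc a b \ S] t, ‖f x‖ ≤ C := by
    intro t ht
    by_cases htS : t ∈ S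
    · obtain ⟨⟨l, hl⟩, ⟨r, hr⟩⟩ := hlim t htS
      obtain ⟨C, hC⟩ := hl.norm.isBoundedUnder_le
      obtain ⟨D, hD⟩ := hr.norm.isBoundedUnder_le
      have hle : 𝓝[Icc a b \ S] t ≤ 𝓝[<] t ⊔ 𝓝[>] t := by
        rw [nhdsLT_sup_nhdsGT]
        exact nhdsWithin_mono _ fun x hx (hxt : x = t) => hx.2 (hxt ▸ htS)
      exact ⟨max C D, hle (eventually_sup.2 ⟨hC.mono fun x hx => le_max_of_le_left hx,
        hD.mono fun x hx => le_max_of_le_right hx⟩)⟩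
    · exact (hcont t ⟨ht, htS⟩).norm.isBoundedUnder_le
  obtain ⟨C, hC⟩ := isCompact_Icc.exists_bound_of_forall_eventually_norm_le hbound
  have hT : MeasurableSet (Icc a b \ S) := measurableSet_Icc.diff hS.measurableSet
  have hint : IntegrableOn f (Icc a b \ S) :=
    ⟨hcont.aestronglyMeasurable hT, .restrict_of_bounded (C := C)
      ((measure_mono sdiff_subset).trans_lt measure_Icc_lt_top)
      ((ae_restrict_iff' hT).2 (ae_of_all _ fun x hx => hC x ⟨hx.1, hx⟩))⟩
  exact hint.congr_set_ae (sdiff_ae_eq_self.2 (measure_mono_null inter_subset_right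
    (hS.measure_zero _))).symm

theorem IsPiecewiseContinuous.intervalIntegrable (hf : IsPiecewiseContinuous f) (a b : ℝ) :
    IntervalIntegrable f volume a b :=
  (hf.piecewiseContinuousOn _ _).integrableOn_Icc.intervalIntegrable

end Integrability

section IntervalIntegral

variable {F : Type*} [NormedAddCommGroup F] [NormedSpace ℝ F]

theorem tendsto_intervalIntegral_neg_of_support_subset {f : ℝ → F} {a b : ℝ}
    (hf : Function.support f ⊆ Ioc a b) (hfi : IntegrableOn f (Ioc a b)) :
    Tendsto (fun T : ℝ => ∫ t in (-T)..T, f t) atTop (𝓝 (∫ t in a..b, f t)) := by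
  rw [intervalIntegral.integral_eq_integral_of_support_subset hf]
  exact intervalIntegral_tendsto_integral ((integrableOn_iff_integrable_of_support_subset hf).1 hfi)
    tendsto_neg_atTop_atBot tendsto_id

theorem intervalIntegral_comp_piecewise_Iic {α : Type*} {g h : ℝ → α} {φ : α → F} {a p b : ℝ}
    (hap : a ≤ p) (hpb : p ≤ b)
    (hint : IntervalIntegrable (fun t => φ ((Iic p).piecewise g h t)) volume a b) :
    ∫ t in a..b, φ ((Iic p).piecewise g h t) = (∫ t in a..p, φ (g t)) + ∫ t in p..b, φ (h t) := by
  have hp : p ∈ uIcc a b := by rw [uIcc_of_le (hap.trans hpb)]; exact ⟨hap, hpb⟩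
  rw [← intervalIntegral.integral_add_adjacent_intervals
    (hint.mono_set (uIcc_subset_uIcc_left hp)) (hint.mono_set (uIcc_subset_uIcc_right hp))]
  congr 1
  · refine intervalIntegral.integral_congr_ae (ae_of_all _ fun t ht => ?_)
    rw [uIoc_of_le hap] at ht
    rw [piecewise_eq_of_mem _ _ _ (mem_Iic.2 ht.2)]
  · refine intervalIntegral.integral_congr_ae (ae_of_all _ fun t ht => ?_)
    rw [uIoc_of_le hpb] at ht
    rw [piecewise_eq_of_notMem (Iic p) g h (notMem_Iic.2 ht.1)]

end IntervalIntegral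

def SolvesOn {Z X : Type*} [NormedAddCommGroup Z] [NormedSpace ℝ Z]
    [NormedAddCommGroup X] [NormedSpace ℝ X] (E L : Z →L[ℝ] X) (z : ℝ → Z) (s : Set ℝ) : Prop :=
  ∀ a ∈ s, ∀ b ∈ s, E (z b) - E (z a) = ∫ τ in a..b, L (z τ)

section SolvesOn

variable {Z X : Type*} [NormedAddCommGroup Z] [NormedSpace ℝ Z]
  [NormedAddCommGroup X] [NormedSpace ℝ X] {E L : Z →L[ℝ] X} {z g h : ℝ → Z} {s s' : Set ℝ}

theorem SolvesOn.mono (hz : SolvesOn E L z s) (hs : s' ⊆ s) : SolvesOn E L z s' :=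
  fun a ha b hb => hz a (hs ha) b (hs hb)

theorem solvesOn_of_forall_le
    (hz : ∀ a ∈ s, ∀ b ∈ s, a ≤ b → E (z b) - E (z a) = ∫ τ in a..b, L (z τ)) :
    SolvesOn E L z s := by
  intro a ha b hb
  rcases le_total a b with hab | hba
  · exact hz a ha b hb hab
  · rw [intervalIntegral.integral_symm, ← hz b hb a ha hba, neg_sub]

theorem solvesOn_const {c : Z} (hc : L c = 0) (s : Set ℝ) : SolvesOn E L (fun _ => c) s := by
  intro a _ b _
  simp [hc]

theorem SolvesOn.congr (hz : SolvesOn E L z s) (hs : s.OrdConnected) (hzg : EqOn z g s) :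
    SolvesOn E L g s := by
  refine solvesOn_of_forall_le fun a ha b hb hab => ?_
  have hsub : uIcc a b ⊆ s := by rw [uIcc_of_le hab]; exact hs.out ha hb
  rw [← hzg ha, ← hzg hb, hz a ha b hb]
  exact intervalIntegral.integral_congr fun τ hτ => by simp only [hzg (hsub hτ)]

theorem SolvesOn.comp_sub_const (hz : SolvesOn E L z s) (c : ℝ) :
    SolvesOn E L (fun t => z (t - c)) ((· - c) ⁻¹' s) := by
  intro a ha b hb
  rw [hz _ ha _ hb, intervalIntegral.integral_comp_sub_right (fun τ => L (z τ))]

theorem SolvesOn.piecewise_Iic {p : ℝ} (hs : s.OrdConnected) (hg : SolvesOn E L g (s ∩ Iic p))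
    (hh : SolvesOn E L h (s ∩ Ici p)) (hp : E (g p) = E (h p))
    (hint : ∀ a b, IntervalIntegrable (fun t => L ((Iic p).piecewise g h t)) volume a b) :
    SolvesOn E L ((Iic p).piecewise g h) s := by
  have hg' : SolvesOn E L ((Iic p).piecewise g h) (s ∩ Iic p) :=
    hg.congr (hs.inter ordConnected_Iic) ((piecewise_eqOn _ _ _).symm.mono inter_subset_right)
  have hh' : SolvesOn E L ((Iic p).piecewise g h) (s ∩ Ioi p) :=
    (hh.mono (inter_subset_inter_right _ Ioi_subset_Ici_self)).congr (hs.inter ordConnected_Ioi)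
      ((piecewise_eqOn_compl (Iic p) g h).symm.mono fun t ht => notMem_Iic.2 ht.2)
  refine solvesOn_of_forall_le fun a ha b hb hab => ?_
  rcases le_or_gt b p with hbp | hpb
  · exact hg' a ⟨ha, hab.trans hbp⟩ b ⟨hb, hbp⟩
  rcases le_or_gt a p with hap | hpa
  · have hps : p ∈ s := hs.out ha hb ⟨hap, hpb.le⟩
    rw [intervalIntegral_comp_piecewise_Iic hap hpb.le (hint a b),
      ← hg a ⟨ha, hap⟩ p ⟨hps, self_mem_Iic⟩, ← hh p ⟨hps, self_mem_Ici⟩ b ⟨hb, hpb.le⟩,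
      piecewise_eq_of_mem _ _ _ (mem_Iic.2 hap),
      piecewise_eq_of_notMem (Iic p) g h (notMem_Iic.2 hpb), hp]
    abel
  · exact hh' a ⟨ha, hpa⟩ b ⟨hb, hpb⟩

theorem SolvesOn.integral_eq_zero (hz : SolvesOn E L z univ) (hzi : Integrable z) :
    ∫ t, L (z t) = 0 := by
  have hlim : Tendsto (fun T => E (z T) - E (z (-T))) atTop (𝓝 (∫ t, L (z t))) :=
    (intervalIntegral_tendsto_integral (L.integrable_comp hzi) tendsto_neg_atTop_atBot
      tendsto_id).congr fun T => (hz _ trivial _ trivial).symm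
  refine IntegrableAtFilter.eq_zero_of_tendsto
    (((E.integrable_comp hzi).sub (E.integrable_comp hzi.comp_neg)).integrableAtFilter _)
    (fun s hs => ?_) hlim
  obtain ⟨b, hb⟩ := mem_atTop_sets.1 hs
  rw [← top_le_iff, ← Real.volume_Ici (a := b)]
  exact measure_mono hb

end SolvesOn

noncomputable def excursion {Z : Type*} [Zero Z] (z₁ : ℝ → Z) (t₁ : ℝ) (z₀ : Z) (τ : ℝ)
    (z₂ : ℝ → Z) (t₂ : ℝ) : ℝ → Z :=
  (Iic 0).piecewise 0 <| (Iic t₁).piecewise z₁ <| (Iic (t₁ + τ)).piecewise (fun _ => z₀) <|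
    (Iic (t₁ + τ + t₂)).piecewise (fun t => z₂ (t - (t₁ + τ))) 0

section Excursion

variable {Z : Type*} {z₁ z₂ : ℝ → Z} {z₀ : Z} {t₁ τ t₂ : ℝ}

theorem excursion_mem [Zero Z] {K : Set Z} (h0 : (0 : Z) ∈ K) (hz₁ : ∀ t, z₁ t ∈ K)
    (hz₀ : z₀ ∈ K) (hz₂ : ∀ t, z₂ t ∈ K) (t : ℝ) : excursion z₁ t₁ z₀ τ z₂ t₂ t ∈ K := by
  simp only [excursion, Set.piecewise]
  split_ifs
  exacts [h0, hz₁ t, hz₀, hz₂ _, h0]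

theorem isPiecewiseContinuous_excursion [TopologicalSpace Z] [Zero Z] (hz₁ : Continuous z₁)
    (hz₂ : Continuous z₂) : IsPiecewiseContinuous (excursion z₁ t₁ z₀ τ z₂ t₂) :=
  continuous_const.isPiecewiseContinuous.piecewise_Iic (hz₁.isPiecewiseContinuous.piecewise_Iic
    (continuous_const.isPiecewiseContinuous.piecewise_Iic
      ((hz₂.comp (continuous_sub_right _)).isPiecewiseContinuous.piecewise_Iic
        continuous_const.isPiecewiseContinuous _) _) _) _

theorem tendsto_intervalIntegral_excursion [TopologicalSpace Z] [Zero Z] {F : Type*}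
    [NormedAddCommGroup F] [NormedSpace ℝ F] [CompleteSpace F] {φ : Z → F} (hφ : Continuous φ)
    (hφ0 : φ 0 = 0) (ht₁ : 0 ≤ t₁) (hτ : 0 ≤ τ) (ht₂ : 0 ≤ t₂) (hz₁ : Continuous z₁)
    (hz₂ : Continuous z₂) :
    Tendsto (fun T : ℝ => ∫ t in (-T)..T, φ (excursion z₁ t₁ z₀ τ z₂ t₂ t)) atTop
      (𝓝 ((∫ t in 0..t₁, φ (z₁ t)) + τ • φ z₀ + ∫ t in 0..t₂, φ (z₂ t))) := by
  set w₃ := (Iic (t₁ + τ + t₂)).piecewise (fun t => z₂ (t - (t₁ + τ))) 0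
  set w₂ := (Iic (t₁ + τ)).piecewise (fun _ => z₀) w₃
  set w₁ := (Iic t₁).piecewise z₁ w₂
  have pc₃ : IsPiecewiseContinuous w₃ :=
    (hz₂.comp (continuous_sub_right _)).isPiecewiseContinuous.piecewise_Iic
      continuous_const.isPiecewiseContinuous _
  have pc₂ : IsPiecewiseContinuous w₂ := continuous_const.isPiecewiseContinuous.piecewise_Iic pc₃ _
  have pc₁ : IsPiecewiseContinuous w₁ := hz₁.isPiecewiseContinuous.piecewise_Iic pc₂ _
  have pc : IsPiecewiseContinuous (excursion z₁ t₁ z₀ τ z₂ t₂) :=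
    isPiecewiseContinuous_excursion hz₁ hz₂
  have hint : ∀ {w : ℝ → Z}, IsPiecewiseContinuous w →
      ∀ a b, IntervalIntegrable (fun t => φ (w t)) volume a b :=
    fun hw => (hw.comp hφ).intervalIntegrable
  have hsupp : Function.support (fun t => φ (excursion z₁ t₁ z₀ τ z₂ t₂ t)) ⊆
      Ioc 0 (t₁ + τ + t₂) := by
    intro t ht
    by_contra hout
    rw [mem_Ioc, not_and_or, not_lt, not_le] at hout
    refine ht ?_
    rcases hout with h | h
    · simp [excursion, h, hφ0]
    · have h1 : ¬ t ≤ 0 := by linarith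
      have h2 : ¬ t ≤ t₁ := by linarith
      have h3 : ¬ t ≤ t₁ + τ := by linarith
      simp [excursion, Set.piecewise, h1, h2, h3, not_le.2 h, hφ0]
  have hval : ∫ t in 0..(t₁ + τ + t₂), φ (excursion z₁ t₁ z₀ τ z₂ t₂ t) =
      (∫ t in 0..t₁, φ (z₁ t)) + τ • φ z₀ + ∫ t in 0..t₂, φ (z₂ t) := by
    change ∫ t in 0..(t₁ + τ + t₂), φ ((Iic 0).piecewise (0 : ℝ → Z) w₁ t) = _
    rw [intervalIntegral_comp_piecewise_Iic le_rfl (by positivity) (hint pc _ _),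
      intervalIntegral_comp_piecewise_Iic ht₁ (by linarith) (hint pc₁ _ _),
      intervalIntegral_comp_piecewise_Iic (by linarith) (by linarith) (hint pc₂ _ _),
      intervalIntegral_comp_piecewise_Iic (by linarith) le_rfl (hint pc₃ _ _),
      intervalIntegral.integral_comp_sub_right (fun t => φ (z₂ t))]
    simp [hφ0]
    abel
  rw [← hval]
  exact tendsto_intervalIntegral_neg_of_support_subset hsupp (hint pc _ _).1

theorem solvesOn_excursion [NormedAddCommGroup Z] [NormedSpace ℝ Z] {X : Type*}
    [NormedAddCommGroup X] [NormedSpace ℝ X] {E L : Z →L[ℝ] X} (ht₁ : 0 ≤ t₁) (hτ : 0 ≤ τ)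
    (ht₂ : 0 ≤ t₂) (hz₁ : Continuous z₁) (hz₂ : Continuous z₂)
    (hs₁ : SolvesOn E L z₁ (Icc 0 t₁)) (hs₂ : SolvesOn E L z₂ (Icc 0 t₂)) (hL₀ : L z₀ = 0)
    (h₁0 : E (z₁ 0) = 0) (h₁1 : E (z₁ t₁) = E z₀) (h₂0 : E (z₂ 0) = E z₀)
    (h₂1 : E (z₂ t₂) = 0) :
    SolvesOn E L (excursion z₁ t₁ z₀ τ z₂ t₂) univ := by
  set w₃ := (Iic (t₁ + τ + t₂)).piecewise (fun t => z₂ (t - (t₁ + τ))) 0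
  set w₂ := (Iic (t₁ + τ)).piecewise (fun _ => z₀) w₃
  set w₁ := (Iic t₁).piecewise z₁ w₂
  have pc₃ : IsPiecewiseContinuous w₃ :=
    (hz₂.comp (continuous_sub_right _)).isPiecewiseContinuous.piecewise_Iic
      continuous_const.isPiecewiseContinuous _
  have pc₂ : IsPiecewiseContinuous w₂ := continuous_const.isPiecewiseContinuous.piecewise_Iic pc₃ _
  have pc₁ : IsPiecewiseContinuous w₁ := hz₁.isPiecewiseContinuous.piecewise_Iic pc₂ _
  have pc : IsPiecewiseContinuous (excursion z₁ t₁ z₀ τ z₂ t₂) :=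
    isPiecewiseContinuous_excursion hz₁ hz₂
  have hint : ∀ {w : ℝ → Z}, IsPiecewiseContinuous w →
      ∀ a b, IntervalIntegrable (fun t => L (w t)) volume a b :=
    fun hw => (hw.comp L.continuous).intervalIntegrable
  have s₃ : SolvesOn E L w₃ (Ici (t₁ + τ)) := by
    refine SolvesOn.piecewise_Iic ordConnected_Ici ((hs₂.comp_sub_const _).mono ?_)
      (solvesOn_const (map_zero L) _) (by simp [h₂1]) (hint pc₃)
    rintro t ⟨h1, h2⟩
    simp only [mem_preimage, mem_Icc]
    constructor <;> linarith [mem_Ici.1 h1, mem_Iic.1 h2]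
  have s₂ : SolvesOn E L w₂ (Ici t₁) :=
    SolvesOn.piecewise_Iic ordConnected_Ici (solvesOn_const hL₀ _) (s₃.mono inter_subset_right)
      (by simp [w₃, ht₂, h₂0]) (hint pc₂)
  have s₁ : SolvesOn E L w₁ (Ici 0) :=
    SolvesOn.piecewise_Iic ordConnected_Ici (hs₁.mono Ici_inter_Iic.subset)
      (s₂.mono inter_subset_right) (by simp [w₂, hτ, h₁1]) (hint pc₁)
  exact SolvesOn.piecewise_Iic ordConnected_univ (solvesOn_const (map_zero L) _)
    (s₁.mono inter_subset_right) (by simp [ht₁, h₁0]) (hint pc)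

end Excursion

theorem nonneg_of_forall_add_mul_nonneg {a b : ℝ} (h : ∀ τ : ℝ, 0 ≤ τ → 0 ≤ a + τ * b) :
    0 ≤ b := by
  by_contra! hb
  have := h ((|a| + 1) / -b) (div_nonneg (by positivity) (neg_nonneg.2 hb.le))
  rw [div_mul_eq_mul_div, div_neg, mul_div_assoc, div_self hb.ne, mul_one] at this
  linarith [le_abs_self a]

theorem Convex.add_mem_of_smul_mem_s6 {V : Type*} [AddCommGroup V] [Module ℝ V] {K : Set V}
    (hK : Convex ℝ K) (hKcone : ∀ z ∈ K, ∀ α : ℝ, 0 ≤ α → α • z ∈ K) {u v : V} (hu : u ∈ K)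
    (hv : v ∈ K) : u + v ∈ K := by
  simpa [smul_add, smul_smul] using
    hKcone _ (hK hu hv (by norm_num : (0 : ℝ) ≤ 1 / 2) (by norm_num : (0 : ℝ) ≤ 1 / 2)
      (by norm_num)) 2 (by norm_num)

theorem Convex.interior_closure_eq_interior {V : Type*} [NormedAddCommGroup V] [NormedSpace ℝ V]
    [FiniteDimensional ℝ V] {s : Set V} (hs : Convex ℝ s) : interior (closure s) = interior s := by
  rcases (interior (closure s)).eq_empty_or_nonempty with h | h
  · rw [h, eq_comm, ← subset_empty_iff, ← h]
    exact interior_mono subset_closure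
  refine hs.interior_closure_eq_interior_of_nonempty_interior ?_
  rw [hs.interior_nonempty_iff_affineSpan_eq_top, eq_top_iff,
    ← hs.closure.interior_nonempty_iff_affineSpan_eq_top.1 h]
  exact affineSpan_le.2 (closure_minimal (subset_affineSpan ℝ s)
    (affineSpan ℝ s).closed_of_finiteDimensional)

theorem eq_univ_of_smul_mem_of_mem_nhds_zero {V : Type*} [NormedAddCommGroup V] [NormedSpace ℝ V]
    {C : Set V} (hC : ∀ x ∈ C, ∀ c : ℝ, 0 ≤ c → c • x ∈ C) (h : C ∈ 𝓝 0) : C = univ := by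
  refine eq_univ_of_forall fun v => ?_
  have hsmall : ∀ᶠ c : ℝ in 𝓝[>] 0, c • v ∈ C :=
    nhdsWithin_le_nhds <|
      ((continuous_id.smul continuous_const).tendsto' (0 : ℝ) 0 (zero_smul ℝ v)) h
  obtain ⟨c, hcv, hc⟩ := (hsmall.and self_mem_nhdsWithin).exists
  simpa [smul_smul, inv_mul_cancel₀ hc.ne'] using hC _ hcv c⁻¹ (inv_nonneg.2 hc.le)

theorem exists_linearMap_le_of_image_eq_univ {Z X : Type*} [AddCommGroup Z] [Module ℝ Z]
    [AddCommGroup X] [Module ℝ X] {K : Set Z} (hKadd : ∀ u ∈ K, ∀ v ∈ K, u + v ∈ K)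
    (hKsmul : ∀ z ∈ K, ∀ c : ℝ, 0 ≤ c → c • z ∈ K) {L : Z →ₗ[ℝ] X} {m : Z →ₗ[ℝ] ℝ}
    (hL : L '' K = univ) (hm : ∀ z ∈ K, L z = 0 → 0 ≤ m z) :
    ∃ p : X →ₗ[ℝ] ℝ, ∀ z ∈ K, p (L z) ≤ m z := by
  obtain ⟨z₀, hz₀, -⟩ := hL.symm ▸ mem_univ (0 : X)
  let s : PointedCone ℝ (X × ℝ) :=
    { carrier := {q | ∃ z ∈ K, L z = q.1 ∧ m z ≤ q.2}
      add_mem' := fun ⟨u, hu, hLu, hmu⟩ ⟨v, hv, hLv, hmv⟩ =>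
        ⟨u + v, hKadd u hu v hv, by simp [hLu, hLv], by simpa using add_le_add hmu hmv⟩
      zero_mem' := ⟨0 • z₀, hKsmul _ hz₀ 0 le_rfl, by simp, by simp⟩
      smul_mem' := fun c q ⟨z, hz, hLz, hmz⟩ =>
        ⟨(c : ℝ) • z, hKsmul z hz c c.2, by simp [hLz], by
          simp only [map_smul, Prod.smul_snd]
          exact mul_le_mul_of_nonneg_left hmz c.2⟩ }
  let f : (X × ℝ) →ₗ.[ℝ] ℝ := (LinearMap.snd ℝ X ℝ).toPMap (LinearMap.ker (LinearMap.fst ℝ X ℝ))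
  have hnonneg : ∀ q : f.domain, (q : X × ℝ) ∈ s → 0 ≤ f q := by
    rintro ⟨q, hq⟩ ⟨z, hz, hLz, hmz⟩
    exact (hm z hz (hLz.trans (LinearMap.mem_ker.1 hq))).trans hmz
  have hdense : ∀ q, ∃ r : f.domain, (r : X × ℝ) + q ∈ s := by
    intro q
    obtain ⟨z, hz, hLz⟩ := hL.symm ▸ mem_univ q.1
    exact ⟨⟨(0, m z - q.2), LinearMap.mem_ker.2 rfl⟩, z, hz, by simp [hLz], by simp⟩
  obtain ⟨g, hgf, hgs⟩ := riesz_extension s f hnonneg hdense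
  refine ⟨-(g.comp (LinearMap.inl ℝ X ℝ)), fun z hz => ?_⟩
  have hg1 : g (0, 1) = 1 := hgf ⟨(0, 1), LinearMap.mem_ker.2 rfl⟩
  have hsplit : g (L z, m z) = g (L z, 0) + m z := by
    rw [show ((L z, m z) : X × ℝ) = (L z, 0) + m z • (0, 1) by simp, map_add, map_smul, hg1,
      smul_eq_mul, mul_one]
  have := hgs (L z, m z) ⟨z, hz, rfl, le_rfl⟩
  simp only [LinearMap.neg_apply, LinearMap.comp_apply, LinearMap.inl_apply]
  linarith

namespace ControllableOn

variable {Z X : Type*} [NormedAddCommGroup Z] [NormedSpace ℝ Z]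
  [NormedAddCommGroup X] [NormedSpace ℝ X] {E L : Z →L[ℝ] X} {K : Set Z}

theorem exists_continuous (hctrl : ControllableOn E L K) {x₀ x₁ : X} (hx₀ : x₀ ∈ E '' K)
    (hx₁ : x₁ ∈ E '' K) : ∃ t₁, 0 ≤ t₁ ∧ ∃ z : ℝ → Z, Continuous z ∧ (∀ t, z t ∈ K) ∧
      SolvesOn E L z (Icc 0 t₁) ∧ E (z 0) = x₀ ∧ E (z t₁) = x₁ := by
  obtain ⟨t₁, ht₁, z, hzc, hzK, hz, rfl, rfl⟩ := hctrl x₀ hx₀ x₁ hx₁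
  set ζ := IccExtend ht₁ ((Icc 0 t₁).domRestrict z)
  have hzζ : EqOn z ζ (Icc 0 t₁) := fun t ht =>
    (IccExtend_of_mem ht₁ ((Icc 0 t₁).domRestrict z) ht).symm
  refine ⟨t₁, ht₁, ζ, continuous_IccExtend_iff.2 hzc.domRestrict,
    fun t => hzK _ (Subtype.mem _), SolvesOn.congr hz ordConnected_Icc hzζ, ?_, ?_⟩
  · rw [← hzζ (left_mem_Icc.2 ht₁)]
  · rw [← hzζ (right_mem_Icc.2 ht₁)]

theorem sub_mem_closure_image [CompleteSpace X] (hctrl : ControllableOn E L K) (hK : Convex ℝ K)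
    (hKcone : ∀ z ∈ K, ∀ α : ℝ, 0 ≤ α → α • z ∈ K) {x₀ x₁ : X} (hx₀ : x₀ ∈ E '' K)
    (hx₁ : x₁ ∈ E '' K) : x₁ - x₀ ∈ closure (L '' K) := by
  obtain ⟨t₁, ht₁, z, hzc, hzK, hz, rfl, rfl⟩ := hctrl.exists_continuous hx₀ hx₁
  rw [hz 0 ⟨le_rfl, ht₁⟩ t₁ ⟨ht₁, le_rfl⟩]
  rcases ht₁.eq_or_lt with rfl | ht₁
  · rw [intervalIntegral.integral_same]
    exact subset_closure ⟨0 • z 0, hKcone _ (hzK 0) 0 le_rfl, by simp⟩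
  have havg : ⨍ t in Ioc 0 t₁, L (z t) ∈ closure (L '' K) :=
    (hK.linear_image L.toLinearMap).set_average_mem_closure (by simp [ht₁])
      measure_Ioc_lt_top.ne (ae_of_all _ fun t => mem_image_of_mem _ (hzK t))
      (L.continuous.comp hzc).integrableOn_Ioc
  have hint : ∫ t in 0..t₁, L (z t) = t₁ • ⨍ t in Ioc 0 t₁, L (z t) := by
    rw [setAverage_eq, intervalIntegral.integral_of_le ht₁.le, smul_smul, Real.volume_real_Ioc,
      sub_zero, max_eq_left ht₁.le, mul_inv_cancel₀ ht₁.ne', one_smul]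
  rw [hint]
  exact map_mem_closure (continuous_const_smul t₁) havg fun y ⟨ζ, hζ, hy⟩ =>
    ⟨t₁ • ζ, hKcone ζ hζ t₁ ht₁.le, by rw [map_smul, hy]⟩

theorem image_eq_univ [FiniteDimensional ℝ X] (hctrl : ControllableOn E L K) (hK : Convex ℝ K)
    (hKcone : ∀ z ∈ K, ∀ α : ℝ, 0 ≤ α → α • z ∈ K) (hint : (interior (E '' K)).Nonempty) :
    L '' K = univ := by
  obtain ⟨x, hx⟩ := hint
  have hLK : Convex ℝ (L '' K) := hK.linear_image L.toLinearMap
  refine eq_univ_of_smul_mem_of_mem_nhds_zero (fun y ⟨ζ, hζ, hy⟩ c hc =>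
    ⟨c • ζ, hKcone ζ hζ c hc, by rw [map_smul, hy]⟩) ?_
  have hnhds : (x + ·) ⁻¹' (E '' K) ∈ 𝓝 (0 : X) :=
    (continuous_const_add x).continuousAt.preimage_mem_nhds
      (by simpa using mem_interior_iff_mem_nhds.1 hx)
  have hcl : closure (L '' K) ∈ 𝓝 (0 : X) := mem_of_superset hnhds fun v hv => by
    simpa using hctrl.sub_mem_closure_image hK hKcone (interior_subset hx) hv
  rwa [← mem_interior_iff_mem_nhds, hLK.interior_closure_eq_interior,
    mem_interior_iff_mem_nhds] at hcl

theorem exists_le_of_nonneg_of_map_eq_zero [FiniteDimensional ℝ X]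
    (hctrl : ControllableOn E L K) (hK : Convex ℝ K)
    (hKcone : ∀ z ∈ K, ∀ α : ℝ, 0 ≤ α → α • z ∈ K) (hint : (interior (E '' K)).Nonempty)
    {m : Z →L[ℝ] ℝ} (hm : ∀ z ∈ K, L z = 0 → 0 ≤ m z) :
    ∃ p : X →L[ℝ] ℝ, ∀ z ∈ K, p (L z) ≤ m z := by
  obtain ⟨p, hp⟩ := exists_linearMap_le_of_image_eq_univ
    (fun u hu v hv => hK.add_mem_of_smul_mem_s6 hKcone hu hv) hKcone (L := L.toLinearMap)
    (m := m.toLinearMap) (hctrl.image_eq_univ hK hKcone hint) hm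
  exact ⟨LinearMap.toContinuousLinearMap p, hp⟩

end ControllableOn

def IntegralConstraint {Z X : Type*} [NormedAddCommGroup Z] [NormedSpace ℝ Z]
    [NormedAddCommGroup X] [NormedSpace ℝ X] (E L : Z →L[ℝ] X) (K : Set Z) (m : Z →L[ℝ] ℝ) :
    Prop :=
  ∀ z : ℝ → Z, (∀ t, z t ∈ K) → (∀ a b : ℝ, PiecewiseContinuousOn z a b) →
    (∀ s t : ℝ, E (z t) - E (z s) = ∫ τ in s..t, L (z τ)) →
    (∃ c : ℝ, Tendsto (fun T : ℝ => ∫ t in (-T)..T, ‖z t‖) atTop (nhds c)) →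
    ∃ c : ℝ, Tendsto (fun T : ℝ => ∫ t in (-T)..T, m (z t)) atTop (nhds c) ∧ 0 ≤ c

section IntegralConstraint

variable {Z X : Type*} [NormedAddCommGroup Z] [NormedSpace ℝ Z]
  [NormedAddCommGroup X] [NormedSpace ℝ X] {E L : Z →L[ℝ] X} {K : Set Z} {m : Z →L[ℝ] ℝ}

theorem integralConstraint_of_forall_le [CompleteSpace X] {p : X →L[ℝ] ℝ}
    (hp : ∀ z ∈ K, p (L z) ≤ m z) : IntegralConstraint E L K m := by
  intro z hzK hpc hz ⟨c, hc⟩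
  have hzi : Integrable z := integrable_of_intervalIntegral_norm_tendsto c
    (fun T => (hpc _ _).integrableOn_Icc.mono_set Ioc_subset_Icc_self) tendsto_neg_atTop_atBot
    tendsto_id hc
  refine ⟨∫ t, m (z t), intervalIntegral_tendsto_integral (m.integrable_comp hzi)
    tendsto_neg_atTop_atBot tendsto_id, ?_⟩
  calc 0 = ∫ t, p (L (z t)) := by
        rw [p.integral_comp_comm (L.integrable_comp hzi),
          SolvesOn.integral_eq_zero (fun a _ b _ => hz a b) hzi, map_zero]
    _ ≤ ∫ t, m (z t) := integral_mono ((p.comp L).integrable_comp hzi) (m.integrable_comp hzi)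
        fun t => hp _ (hzK t)

theorem IntegralConstraint.nonneg_of_map_eq_zero (h : IntegralConstraint E L K m)
    (hKcone : ∀ z ∈ K, ∀ α : ℝ, 0 ≤ α → α • z ∈ K) (hctrl : ControllableOn E L K) :
    ∀ z₀ ∈ K, L z₀ = 0 → 0 ≤ m z₀ := by
  intro z₀ hz₀ hL₀
  have h0 : (0 : Z) ∈ K := by simpa using hKcone z₀ hz₀ 0 le_rfl
  obtain ⟨t₁, ht₁, z₁, hz₁, hz₁K, hs₁, h₁0, h₁1⟩ :=
    hctrl.exists_continuous ⟨0, h0, map_zero E⟩ ⟨z₀, hz₀, rfl⟩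
  obtain ⟨t₂, ht₂, z₂, hz₂, hz₂K, hs₂, h₂0, h₂1⟩ :=
    hctrl.exists_continuous ⟨z₀, hz₀, rfl⟩ ⟨0, h0, map_zero E⟩
  refine nonneg_of_forall_add_mul_nonneg (a := (∫ t in 0..t₁, m (z₁ t)) + ∫ t in 0..t₂, m (z₂ t))
    fun τ hτ => ?_
  have hsol := solvesOn_excursion ht₁ hτ ht₂ hz₁ hz₂ hs₁ hs₂ hL₀ h₁0 h₁1 h₂0 h₂1
  obtain ⟨c, hc, hc0⟩ := h _ (excursion_mem h0 hz₁K hz₀ hz₂K)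
    (isPiecewiseContinuous_excursion hz₁ hz₂).piecewiseContinuousOn
    (fun s t => hsol s trivial t trivial)
    ⟨_, tendsto_intervalIntegral_excursion continuous_norm norm_zero ht₁ hτ ht₂ hz₁ hz₂⟩
  rw [tendsto_nhds_unique hc (tendsto_intervalIntegral_excursion m.continuous (map_zero m) ht₁
    hτ ht₂ hz₁ hz₂), smul_eq_mul] at hc0
  linarith

end IntegralConstraint

theorem conic_ineq_iff_integral_constraint_iff_kernel_nonneg_general
    {Z X : Type*} [NormedAddCommGroup Z] [NormedSpace ℝ Z]
    [NormedAddCommGroup X] [NormedSpace ℝ X] [FiniteDimensional ℝ X]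
    (K : Set Z) (hKcone : ∀ z ∈ K, ∀ α : ℝ, 0 ≤ α → α • z ∈ K) (hKconv : Convex ℝ K)
    (E L : Z →L[ℝ] X) (hctrl : ControllableOn E L K)
    (hint : (interior (E '' K)).Nonempty)
    (mstar : Z →L[ℝ] ℝ) :
    ((∃ pstar : X →L[ℝ] ℝ, ∀ z ∈ K, pstar (L z) - mstar z ≤ 0) ↔
      (∀ z : ℝ → Z, (∀ t, z t ∈ K) →
        (∀ a b : ℝ, PiecewiseContinuousOn z a b) →
        (∀ s t : ℝ, E (z t) - E (z s) = ∫ τ in s..t, L (z τ)) →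
        (∃ c : ℝ, Tendsto (fun T : ℝ => ∫ t in (-T)..T, ‖z t‖) atTop (nhds c)) →
        ∃ c : ℝ, Tendsto (fun T : ℝ => ∫ t in (-T)..T, mstar (z t)) atTop (nhds c) ∧
          0 ≤ c)) ∧
    ((∀ z : ℝ → Z, (∀ t, z t ∈ K) →
        (∀ a b : ℝ, PiecewiseContinuousOn z a b) →
        (∀ s t : ℝ, E (z t) - E (z s) = ∫ τ in s..t, L (z τ)) →
        (∃ c : ℝ, Tendsto (fun T : ℝ => ∫ t in (-T)..T, ‖z t‖) atTop (nhds c)) →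
        ∃ c : ℝ, Tendsto (fun T : ℝ => ∫ t in (-T)..T, mstar (z t)) atTop (nhds c) ∧
          0 ≤ c) ↔
      (∀ z0 ∈ K, L z0 = 0 → 0 ≤ mstar z0)) := by
  simp only [sub_nonpos]
  have h12 : (∃ p : X →L[ℝ] ℝ, ∀ z ∈ K, p (L z) ≤ mstar z) → IntegralConstraint E L K mstar :=
    fun ⟨_, hp⟩ => integralConstraint_of_forall_le hp
  have h23 : IntegralConstraint E L K mstar → ∀ z₀ ∈ K, L z₀ = 0 → 0 ≤ mstar z₀ :=
    fun h => h.nonneg_of_map_eq_zero hKcone hctrl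
  have h31 := hctrl.exists_le_of_nonneg_of_map_eq_zero hKconv hKcone hint (m := mstar)
  exact ⟨⟨h12, fun h => h31 (h23 h)⟩, ⟨h23, fun h => h12 (h31 h)⟩⟩

/-- cone analog of the KYP lemma. Assume `(E, L)` is controllable
on the convex cone `K` and `E(K)` has nonempty interior. Then the following are
equivalent: (i) the conic inequality `p*(L z) ≤ m*(z)` on `K` is solvable; (ii) every
piecewise continuous, absolutely integrable, `K`-valued solution of `d/dt E(z) = L(z)`
on `ℝ` has nonnegative principal-value integral `∫ m*(z(t)) dt`; (iii) `m*` is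
nonnegative on kernel points of `L` in `K`. -/
theorem conic_ineq_iff_integral_constraint_iff_kernel_nonneg
    {Z X : Type*} [NormedAddCommGroup Z] [NormedSpace ℝ Z] [FiniteDimensional ℝ Z]
    [NormedAddCommGroup X] [NormedSpace ℝ X] [FiniteDimensional ℝ X]
    (K : Set Z) (hKcone : ∀ z ∈ K, ∀ α : ℝ, 0 ≤ α → α • z ∈ K) (hKconv : Convex ℝ K)
    (E L : Z →L[ℝ] X) (hctrl : ControllableOn E L K)
    (hint : (interior (E '' K)).Nonempty)
    (mstar : Z →L[ℝ] ℝ) :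
    ((∃ pstar : X →L[ℝ] ℝ, ∀ z ∈ K, pstar (L z) - mstar z ≤ 0) ↔
      (∀ z : ℝ → Z, (∀ t, z t ∈ K) →
        (∀ a b : ℝ, PiecewiseContinuousOn z a b) →
        (∀ s t : ℝ, E (z t) - E (z s) = ∫ τ in s..t, L (z τ)) →
        (∃ c : ℝ, Tendsto (fun T : ℝ => ∫ t in (-T)..T, ‖z t‖) atTop (nhds c)) →
        ∃ c : ℝ, Tendsto (fun T : ℝ => ∫ t in (-T)..T, mstar (z t)) atTop (nhds c) ∧
          0 ≤ c)) ∧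
    ((∀ z : ℝ → Z, (∀ t, z t ∈ K) →
        (∀ a b : ℝ, PiecewiseContinuousOn z a b) →
        (∀ s t : ℝ, E (z t) - E (z s) = ∫ τ in s..t, L (z τ)) →
        (∃ c : ℝ, Tendsto (fun T : ℝ => ∫ t in (-T)..T, ‖z t‖) atTop (nhds c)) →
        ∃ c : ℝ, Tendsto (fun T : ℝ => ∫ t in (-T)..T, mstar (z t)) atTop (nhds c) ∧
          0 ≤ c) ↔
      (∀ z0 ∈ K, L z0 = 0 → 0 ≤ mstar z0)) :=
  conic_ineq_iff_integral_constraint_iff_kernel_nonneg_general K hKcone hKconv E L hctrl hint mstar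
end
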